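/- Let p2, p1, p0, q2 be real numbers with q2 ≠ 0 and r a nonzero real number. If ω10 > 0 satisfies ω10⁸ + n1*ω10⁶ + n2*ω10⁴ + n3*ω10² + n4 = 0 with n1 = (p2 + q2)² − 2*(p1 + q2*p2), n2 = (p1 + q2*p2)² + 2*q2*p0 − 2*(p0 + p1*q2)*(p2 + q2), n3 = (p0 + p1*q2)² − 2*q2*p0*(p1 + q2*p2), n4 = p0²*q2² − r²*q2², then there exists τ1 ∈ [0, 2π/ω10) such that q2*r*cos(ω10*τ1) = −ω10⁴ + (p1 + q2*p2)*ω10² − q2*p0 and q2*r*sin(ω10*τ1) = −(p2 + q2)*ω10³ + (p0 + p1*q2)*ω10; equivalently, λ = iω10 is a root of (λ + q2)*(λ³ + p2*λ² + p1*λ + p0) + r*q2*e^{−λ*τ1} = 0. -/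

import Mathlib

/-!
Squaring and adding the real and imaginary parts of `Δ₁(iω, τ) = 0` eliminates `τ` and gives
the degree-8 equation, which says exactly that the point `(A, B)` of the two right-hand sides
lies on the circle of radius `|q₂ r|`. Conversely, any point on that circle is
`q₂ r (cos θ, sin θ)` for some `θ ∈ [0, 2π)`, and `τ = θ / ω` is the critical delay.
-/

open Real Complex Set

theorem exists_mem_Ico_cos_eq_sin_eq {x y : ℝ} (h : x ^ 2 + y ^ 2 = 1) :
    ∃ θ ∈ Ico 0 (2 * π), Real.cos θ = x ∧ Real.sin θ = y := by
  have hnorm : ‖(⟨x, y⟩ : ℂ)‖ = 1 := by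
    rw [Complex.norm_def, Complex.normSq_mk, ← sq, ← sq, h, Real.sqrt_one]
  obtain ⟨θ₀, hθ₀⟩ := (Complex.norm_eq_one_iff _).1 hnorm
  have hper : Function.Periodic (fun θ ↦ (Real.cos θ, Real.sin θ)) (2 * π) := fun θ ↦ by
    simp only [Real.cos_periodic θ, Real.sin_periodic θ]
  obtain ⟨θ, hθ, hθ₀θ⟩ := hper.exists_mem_Ico₀ two_pi_pos θ₀
  obtain ⟨hcos, hsin⟩ := Prod.mk.inj hθ₀θ
  refine ⟨θ, hθ, ?_, ?_⟩
  · rw [← hcos, ← exp_ofReal_mul_I_re, hθ₀]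
  · rw [← hsin, ← exp_ofReal_mul_I_im, hθ₀]

theorem exists_mem_Ico_mul_cos_eq_mul_sin_eq {a b c : ℝ} (hc : c ≠ 0)
    (h : a ^ 2 + b ^ 2 = c ^ 2) :
    ∃ θ ∈ Ico 0 (2 * π), c * Real.cos θ = a ∧ c * Real.sin θ = b := by
  obtain ⟨θ, hθ, hcos, hsin⟩ := exists_mem_Ico_cos_eq_sin_eq (x := a / c) (y := b / c) (by
    field_simp; exact h)
  exact ⟨θ, hθ, by rw [hcos]; field_simp, by rw [hsin]; field_simp⟩

theorem exp_neg_I_mul_mul (ω τ : ℝ) :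
    Complex.exp (-(I * ω) * τ) = Real.cos (ω * τ) - Real.sin (ω * τ) * I := by
  rw [show -(I * ω) * τ = ((-(ω * τ) : ℝ) : ℂ) * I by push_cast; ring, exp_mul_I,
    ← ofReal_cos, ← ofReal_sin, Real.cos_neg, Real.sin_neg, ofReal_neg]
  ring

theorem characteristic_eq_zero_of_mul_cos_eq_of_mul_sin_eq {p2 p1 p0 q2 r ω τ : ℝ}
    (hcos : q2 * r * Real.cos (ω * τ) = -ω ^ 4 + (p1 + q2 * p2) * ω ^ 2 - q2 * p0)
    (hsin : q2 * r * Real.sin (ω * τ) = -(p2 + q2) * ω ^ 3 + (p0 + p1 * q2) * ω) :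
    (I * ω + q2) * ((I * ω) ^ 3 + p2 * (I * ω) ^ 2 + p1 * (I * ω) + p0)
      + r * q2 * Complex.exp (-(I * ω) * τ) = 0 := by
  have hcos' := congrArg ((↑) : ℝ → ℂ) hcos
  have hsin' := congrArg ((↑) : ℝ → ℂ) hsin
  push_cast at hcos' hsin'
  rw [exp_neg_I_mul_mul]
  push_cast
  linear_combination hcos' - I * hsin' + (ω ^ 4 * I ^ 2 + (p2 + q2) * I * ω ^ 3
    + (p1 + q2 * p2) * ω ^ 2 - ω ^ 4) * I_sq

/-- Every positive root of the degree-8 polynomial admits a critical delay. -/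
theorem stmt_15 (p2 p1 p0 q2 : ℝ) (hq2 : q2 ≠ 0) (r : ℝ) (hr : r ≠ 0)
    (ω10 : ℝ) (hω10 : 0 < ω10)
    (n1 n2 n3 n4 : ℝ)
    (hn1 : n1 = (p2 + q2) ^ 2 - 2 * (p1 + q2 * p2))
    (hn2 : n2 = (p1 + q2 * p2) ^ 2 + 2 * q2 * p0
        - 2 * (p0 + p1 * q2) * (p2 + q2))
    (hn3 : n3 = (p0 + p1 * q2) ^ 2 - 2 * q2 * p0 * (p1 + q2 * p2))
    (hn4 : n4 = p0 ^ 2 * q2 ^ 2 - r ^ 2 * q2 ^ 2)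
    (h : ω10 ^ 8 + n1 * ω10 ^ 6 + n2 * ω10 ^ 4 + n3 * ω10 ^ 2 + n4 = 0) :
    ∃ τ1 : ℝ, 0 ≤ τ1 ∧ τ1 < 2 * Real.pi / ω10 ∧
      q2 * r * Real.cos (ω10 * τ1)
        = -ω10 ^ 4 + (p1 + q2 * p2) * ω10 ^ 2 - q2 * p0 ∧
      q2 * r * Real.sin (ω10 * τ1)
        = -(p2 + q2) * ω10 ^ 3 + (p0 + p1 * q2) * ω10 ∧
      (Complex.I * ω10 + q2) *
          ((Complex.I * ω10) ^ 3 + p2 * (Complex.I * ω10) ^ 2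
            + p1 * (Complex.I * ω10) + p0)
        + r * q2 * Complex.exp (-(Complex.I * ω10) * τ1) = 0 := by
  have hcircle : (-ω10 ^ 4 + (p1 + q2 * p2) * ω10 ^ 2 - q2 * p0) ^ 2
      + (-(p2 + q2) * ω10 ^ 3 + (p0 + p1 * q2) * ω10) ^ 2 = (q2 * r) ^ 2 := by
    subst hn1 hn2 hn3 hn4
    linear_combination h
  obtain ⟨θ, ⟨hθ₀, hθ₂π⟩, hcos, hsin⟩ :=
    exists_mem_Ico_mul_cos_eq_mul_sin_eq (mul_ne_zero hq2 hr) hcircle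
  have hωτ : ω10 * (θ / ω10) = θ := mul_div_cancel₀ θ hω10.ne'
  refine ⟨θ / ω10, div_nonneg hθ₀ hω10.le, div_lt_div_of_pos_right hθ₂π hω10, ?_, ?_, ?_⟩
  · rwa [hωτ]
  · rwa [hωτ]
  · exact characteristic_eq_zero_of_mul_cos_eq_of_mul_sin_eq (by rwa [hωτ]) (by rwa [hωτ])
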